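/- Let φ be a white-noise random dynamical system on a complete separable metric space (E,d) with invariant probability measure ρ satisfying weak local pointwise stability on a Borel set U with ρ(U) > 0. Let μ : Ω → P(E) be an F_0-measurable random Borel probability measure on E such that E[μ_ω(B)] = ρ(B) for every Borel set B and such that for each t ≥ 0 the pushforward of μ_ω under φ_t(ω,·) equals μ_{θ_t ω} almost surely. Then with positive probability μ_ω has at least one atom; equivalently, it is not the case that (μ_ω ⊗ μ_ω)(Δ) = 0 almost surely, where Δ denotes the diagonal in E × E. -/

import Mathlib

open MeasureTheory ProbabilityTheory Filter Topology
open scoped ENNReal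

/-- A white-noise (filtered) random dynamical system on a metric space `E` over an ergodic
metric dynamical system `θ` on a probability space `(Ω, F, P)`. -/
structure WhiteNoiseRDS (Ω E : Type) [MeasurableSpace Ω] [MetricSpace E]
    [MeasurableSpace E] [BorelSpace E] where
  /-- the underlying probability measure -/
  P : Measure Ω
  P_prob : IsProbabilityMeasure P
  /-- the metric dynamical system (group of shifts) -/
  θ : ℝ → Ω → Ω
  θ_meas : ∀ t, Measurable (θ t)
  θ_zero : ∀ ω, θ 0 ω = ω
  θ_add : ∀ s t : ℝ, ∀ ω, θ (s + t) ω = θ s (θ t ω)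
  θ_preserves : ∀ t, MeasurePreserving (θ t) P P
  θ_ergodic : ∀ A : Set Ω, MeasurableSet A → (∀ t, θ t ⁻¹' A = A) → P A = 0 ∨ P A = 1
  /-- the cocycle -/
  φ : ℝ → Ω → E → E
  φ_meas : Measurable fun p : ℝ × Ω × E => φ p.1 p.2.1 p.2.2
  φ_zero : ∀ ω x, φ 0 ω x = x
  φ_cocycle : ∀ s t : ℝ, 0 ≤ s → 0 ≤ t → ∀ ω x, φ (t + s) ω x = φ t (θ s ω) (φ s ω x)
  φ_cont : ∀ s : ℝ, 0 ≤ s → ∀ ω, Continuous fun x => φ s ω x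
  /-- two-parameter filtration -/
  F : ℝ → ℝ → MeasurableSpace Ω
  F_le : ∀ s t : ℝ, F s t ≤ ‹MeasurableSpace Ω›
  F_mono : ∀ s t u v : ℝ, s ≤ t → t ≤ u → u ≤ v → F t u ≤ F s v
  F_shift : ∀ r s t : ℝ, F (s + r) (t + r) = MeasurableSpace.comap (θ r) (F s t)
  F_indep : ∀ (n : ℕ) (ts : Fin (n + 1) → ℝ), Monotone ts →
    iIndep (fun i : Fin n => F (ts i.castSucc) (ts i.succ)) P
  φ_adapted : ∀ s : ℝ, 0 ≤ s → ∀ x : E, Measurable[F 0 s] fun ω => φ s ω x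

namespace WhiteNoiseRDS

variable {Ω E : Type} [MeasurableSpace Ω] [MetricSpace E] [MeasurableSpace E] [BorelSpace E]

/-- `F_0`: the smallest σ-algebra containing all `F s 0`, `s ≤ 0`. -/
def F0 (R : WhiteNoiseRDS Ω E) : MeasurableSpace Ω := ⨆ s ∈ Set.Iic (0 : ℝ), R.F s 0

/-- `ρ` is an invariant probability measure for the Markov semigroup associated to `φ`. -/
def Invariant (R : WhiteNoiseRDS Ω E) (ρ : Measure E) : Prop :=
  ∀ t : ℝ, 0 ≤ t → ∀ f : BoundedContinuousFunction E ℝ,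
    ∫ x, (∫ ω, f (R.φ t ω x) ∂ R.P) ∂ρ = ∫ x, f x ∂ρ

/-- `φ` is strongly mixing w.r.t. `ρ`: the law of `φ_t(·,x)` converges weakly to `ρ`. -/
def StronglyMixing (R : WhiteNoiseRDS Ω E) (ρ : Measure E) : Prop :=
  ∀ x : E, ∀ f : BoundedContinuousFunction E ℝ,
    Tendsto (fun t : ℝ => ∫ ω, f (R.φ t ω x) ∂ R.P) atTop (𝓝 (∫ y, f y ∂ρ))

/-- Weak global pointwise stability: there is a Borel set `U` of full `ρ`-measure and times
`t n ↑ ∞` such that any two points of `U` come `η`-close along `t n` with probability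
bounded below by some `δ(x,y) > 0`. -/
def WeakGlobalPointwiseStability (R : WhiteNoiseRDS Ω E) (ρ : Measure E) : Prop :=
  ∃ U : Set E, MeasurableSet U ∧ ρ U = 1 ∧
    ∃ t : ℕ → ℝ, StrictMono t ∧ Tendsto t atTop atTop ∧
      ∀ x ∈ U, ∀ y ∈ U, ∃ δ : ℝ≥0∞, 0 < δ ∧ ∀ η : ℝ, 0 < η →
        δ ≤ liminf (fun n => R.P {ω | dist (R.φ (t n) ω x) (R.φ (t n) ω y) ≤ η}) atTop

/-- Weak synchronization: there is an `F_0`-measurable random point `a` which is invariant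
under the flow and attracts every deterministic point in probability (in the pullback sense). -/
def WeakSynchronization (R : WhiteNoiseRDS Ω E) : Prop :=
  ∃ a : Ω → E, Measurable[R.F0] a ∧
    (∀ t : ℝ, 0 ≤ t → ∀ᵐ ω ∂ R.P, R.φ t ω (a ω) = a (R.θ t ω)) ∧
    ∀ x : E, ∀ ε : ℝ, 0 < ε →
      Tendsto (fun t : ℝ => R.P {ω | ε ≤ dist (R.φ t (R.θ (-t) ω) x) (a ω)}) atTop (𝓝 0)

end WhiteNoiseRDS

/-- Weak local pointwise stability on a Borel set `U` with `ρ(U) > 0`. -/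
def WhiteNoiseRDS.WeakLocalPointwiseStabilityOn {Ω E : Type} [MeasurableSpace Ω]
    [MetricSpace E] [MeasurableSpace E] [BorelSpace E]
    (R : WhiteNoiseRDS Ω E) (ρ : MeasureTheory.Measure E) (U : Set E) : Prop :=
  MeasurableSet U ∧ 0 < ρ U ∧
    ∃ t : ℕ → ℝ, StrictMono t ∧ Filter.Tendsto t Filter.atTop Filter.atTop ∧
      ∀ x ∈ U, ∀ y ∈ U, ∃ δ : ℝ≥0∞, 0 < δ ∧ ∀ η : ℝ, 0 < η →
        δ ≤ Filter.liminf
          (fun n => R.P {ω | dist (R.φ (t n) ω x) (R.φ (t n) ω y) ≤ η}) Filter.atTop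

/-! If `μ_ω ⊗ μ_ω` almost surely did not charge the diagonal, the mean two-point law
`ν = E[μ_ω ⊗ μ_ω]` would give vanishing mass to the `η`-neighbourhoods `D_η` of the diagonal.
By equivariance and `θ`-invariance of `P`, `ν(D_η)` is the probability that the two-point motion
at time `t`, started from `μ_ω ⊗ μ_ω`, lands in `D_η`. Since `μ` is `F_0`-measurable and the motion
up to time `t` is `F_{0,t}`-measurable, these are independent and the joint law freezes into
`P ⊗ ν`, so `ν(D_η) = ∫ P(d(φ_t x, φ_t y) ≤ η) dν(x, y)`. Fatou's lemma along the stability times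
and the lower bound `δ(x, y) > 0` then give `ν(U × U) = 0`, i.e. `μ_ω(U) = 0` almost surely,
contradicting `E[μ_ω(U)] = ρ(U) > 0`. -/

open MeasurableSpace Set

section Freezing

variable {Ω G : Type*} {m₁ m₂ : MeasurableSpace Ω} [mΩ : MeasurableSpace Ω]
  [mG : MeasurableSpace G] {P : Measure Ω}

theorem setLIntegral_eq_mul_lintegral_of_indep (hm₁ : m₁ ≤ mΩ) (hm₂ : m₂ ≤ mΩ)
    (hindep : Indep m₂ m₁ P) {f : Ω → ℝ≥0∞} (hf : Measurable[m₂] f) {A : Set Ω}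
    (hA : MeasurableSet[m₁] A) :
    ∫⁻ ω in A, f ω ∂P = P A * ∫⁻ ω, f ω ∂P := by
  have h := lintegral_mul_indicator_eq_lintegral_mul_lintegral_indicator hm₂ 1 (hm₁ _ hA)
    (indepSets_of_indepSets_of_le_right hindep (singleton_subset_iff.2 hA)) hf
  simp only [← indicator_mul_right, mul_one, lintegral_indicator (hm₁ _ hA)] at h
  rw [h, setLIntegral_one, mul_comm]

theorem compProd_apply_eq_prod_comp_of_indep [IsProbabilityMeasure P] (hm₁ : m₁ ≤ mΩ)
    (hm₂ : m₂ ≤ mΩ) (hindep : Indep m₂ m₁ P) (κ : Kernel Ω G) [IsMarkovKernel κ]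
    {C : Set (Set G)} (hC : IsPiSystem C) (hgen : generateFrom C = mG)
    (hspan : IsCountablySpanning C) (hκ : ∀ B ∈ C, Measurable[m₂] fun ω => κ ω B)
    {S : Set (Ω × G)} (hS : MeasurableSet[m₁.prod mG] S) :
    (P ⊗ₘ κ) S = (P.prod (κ ∘ₘ P)) S := by
  have hle : m₁.prod mG ≤ (inferInstance : MeasurableSpace (Ω × G)) :=
    sup_le_sup (comap_mono hm₁) le_rfl
  have hrect : ∀ A, MeasurableSet[m₁] A → ∀ B ∈ C,
      (P ⊗ₘ κ) (A ×ˢ B) = (P.prod (κ ∘ₘ P)) (A ×ˢ B) := by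
    intro A hA B hB
    have hBm : MeasurableSet B := hgen ▸ measurableSet_generateFrom hB
    rw [Measure.compProd_apply_prod (hm₁ _ hA) hBm, Measure.prod_prod,
      Measure.bind_apply hBm κ.measurable.aemeasurable]
    exact setLIntegral_eq_mul_lintegral_of_indep hm₁ hm₂ hindep (hκ B hB) hA
  have htrim : (P ⊗ₘ κ).trim hle = (P.prod (κ ∘ₘ P)).trim hle := by
    refine ext_of_generate_finite (image2 (· ×ˢ ·) {A | MeasurableSet[m₁] A} C) ?_
      ((@isPiSystem_measurableSet Ω m₁).prod hC) ?_ ?_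
    · have h := generateFrom_prod_eq (C := {A | MeasurableSet[m₁] A}) (D := C)
        (@isCountablySpanning_measurableSet Ω m₁) hspan
      rw [@generateFrom_measurableSet Ω m₁, hgen] at h
      exact h
    · rintro _ ⟨A, hA, B, hB, rfl⟩
      have hAB : MeasurableSet[m₁.prod mG] (A ×ˢ B) :=
        @MeasurableSet.prod Ω G m₁ mG _ _ hA (hgen ▸ measurableSet_generateFrom hB)
      rw [trim_measurableSet_eq hle hAB, trim_measurableSet_eq hle hAB]
      exact hrect A hA B hB
    · rw [trim_measurableSet_eq hle MeasurableSet.univ,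
        trim_measurableSet_eq hle MeasurableSet.univ]
      simp
  rw [← trim_measurableSet_eq hle hS, htrim, trim_measurableSet_eq hle hS]

end Freezing

theorem MeasureTheory.Measure.bind_apply_eq_zero_iff {α β : Type*} [MeasurableSpace α]
    [MeasurableSpace β] {P : Measure α} (η : Kernel α β) {s : Set β} (hs : MeasurableSet s) :
    (η ∘ₘ P) s = 0 ↔ ∀ᵐ a ∂P, η a s = 0 := by
  rw [Measure.bind_apply hs η.measurable.aemeasurable, lintegral_eq_zero_iff (η.measurable_coe hs)]
  rfl

theorem measure_eq_zero_of_forall_le_liminf {X : Type*} [MeasurableSpace X] {ν : Measure X}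
    {V : Set X} (hV : MeasurableSet V) {q : ℕ → ℕ → X → ℝ≥0∞}
    (hq : ∀ k n, Measurable (q k n)) {c : ℕ → ℝ≥0∞}
    (hc : ∀ k, ∀ᶠ n in atTop, ∫⁻ x, q k n x ∂ν ≤ c k) (hc₀ : Tendsto c atTop (𝓝 0))
    (hpos : ∀ x ∈ V, ∃ δ, 0 < δ ∧ ∀ k, δ ≤ liminf (fun n => q k n x) atTop) :
    ν V = 0 := by
  set f : X → ℝ≥0∞ := fun x => ⨅ k, liminf (fun n => q k n x) atTop
  have hf : Measurable f := .iInf fun k => .liminf (hq k)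
  have hle : ∀ k, ∫⁻ x in V, f x ∂ν ≤ c k := fun k =>
    calc ∫⁻ x in V, f x ∂ν
        ≤ ∫⁻ x, liminf (fun n => q k n x) atTop ∂ν :=
          (setLIntegral_le_lintegral V f).trans (lintegral_mono fun x => iInf_le _ k)
      _ ≤ liminf (fun n => ∫⁻ x, q k n x ∂ν) atTop := lintegral_liminf_le (hq k)
      _ ≤ c k := liminf_le_of_frequently_le' (hc k).frequently
  have hzero : ∀ᵐ x ∂ν, x ∈ V → f x = 0 :=
    (setLIntegral_eq_zero_iff hV hf).1 (nonpos_iff_eq_zero.1 (ge_of_tendsto' hc₀ hle))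
  refine measure_mono_null (fun x hx => ?_) (ae_iff.1 hzero)
  obtain ⟨δ, hδ, hδq⟩ := hpos x hx
  exact fun h => (hδ.trans_le (le_iInf hδq)).ne' (h hx)

theorem tendsto_measure_setOf_dist_le_one_div {E : Type*} [MetricSpace E] [MeasurableSpace E]
    [OpensMeasurableSpace (E × E)] (ν : Measure (E × E)) [IsFiniteMeasure ν] :
    Tendsto (fun k : ℕ => ν {z | dist z.1 z.2 ≤ 1 / ((k : ℝ) + 1)}) atTop
      (𝓝 (ν (diagonal E))) := by
  have hinter : ⋂ k : ℕ, {z : E × E | dist z.1 z.2 ≤ 1 / ((k : ℝ) + 1)} = diagonal E := by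
    ext z
    simp only [mem_iInter, mem_ofPred_eq, mem_diagonal_iff]
    refine ⟨fun h => dist_le_zero.1 (ge_of_tendsto' tendsto_one_div_add_atTop_nhds_zero_nat h),
      fun h k => by rw [h, dist_self]; positivity⟩
  rw [← hinter]
  refine tendsto_measure_iInter_atTop
    (fun k => (isClosed_le continuous_dist continuous_const).measurableSet.nullMeasurableSet)
    (fun i j hij => ofPred_subset_ofPred.2 fun z hz => hz.trans (by gcongr))
    ⟨0, measure_ne_top _ _⟩

theorem measurable_pairMap_of_continuous_of_measurable {Ω X Y : Type*} [mΩ : MeasurableSpace Ω]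
    [TopologicalSpace X] [TopologicalSpace.MetrizableSpace X] [SecondCountableTopology X]
    [MeasurableSpace X] [OpensMeasurableSpace X] [TopologicalSpace Y]
    [TopologicalSpace.PseudoMetrizableSpace Y] [MeasurableSpace Y] [BorelSpace Y] {f : Ω → X → Y} (hcont : ∀ ω, Continuous (f ω))
    (hmeas : ∀ x, Measurable fun ω => f ω x) :
    Measurable fun p : Ω × X × X => (f p.1 p.2.1, f p.1 p.2.2) := by
  have h : Measurable fun q : X × Ω => f q.2 q.1 :=
    measurable_uncurry_of_continuous_of_measurable hcont hmeas
  exact (h.comp (measurable_snd.fst.prodMk measurable_fst)).prodMk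
    (h.comp (measurable_snd.snd.prodMk measurable_fst))

namespace WhiteNoiseRDS

variable {Ω E : Type} [MeasurableSpace Ω] [MetricSpace E] [MeasurableSpace E] [BorelSpace E]
  (R : WhiteNoiseRDS Ω E)

theorem F0_le : R.F0 ≤ ‹MeasurableSpace Ω› :=
  iSup₂_le fun s _ => R.F_le s 0

theorem indep_F_F {s t u : ℝ} (hst : s ≤ t) (htu : t ≤ u) :
    Indep (R.F s t) (R.F t u) R.P := by
  have hmono : Monotone ![s, t, u] := Fin.monotone_iff_le_succ.2 <| by
    simp [Fin.forall_fin_two, hst, htu]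
  simpa using (R.F_indep 2 ![s, t, u] hmono).indep (i := 0) (j := 1) (by decide)

theorem indep_F0_F {t : ℝ} (ht : 0 ≤ t) : Indep R.F0 (R.F 0 t) R.P := by
  have := R.P_prob
  have hanti : Antitone fun s : Iic (0 : ℝ) => R.F s 0 :=
    fun a b hab => R.F_mono _ _ _ _ hab b.2 le_rfl
  rw [F0, iSup_subtype']
  exact indep_iSup_of_directed_le (fun s => R.indep_F_F s.2 ht) (fun s => R.F_le _ _)
    (R.F_le 0 t) hanti.directed_le

def twoPointMotion (t : ℝ) (p : Ω × E × E) : E × E :=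
  (R.φ t p.1 p.2.1, R.φ t p.1 p.2.2)

theorem measurable_φ_uncurry (t : ℝ) : Measurable fun q : Ω × E => R.φ t q.1 q.2 :=
  R.φ_meas.comp (measurable_const.prodMk measurable_id)

theorem measurable_twoPointMotion (t : ℝ) : Measurable (R.twoPointMotion t) :=
  ((R.measurable_φ_uncurry t).comp (measurable_fst.prodMk measurable_snd.fst)).prodMk
    ((R.measurable_φ_uncurry t).comp (measurable_fst.prodMk measurable_snd.snd))

theorem measurable_twoPointMotion_F [SecondCountableTopology E] {t : ℝ} (ht : 0 ≤ t) :
    Measurable[(R.F 0 t).prod inferInstance] (R.twoPointMotion t) :=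
  measurable_pairMap_of_continuous_of_measurable (mΩ := R.F 0 t) (R.φ_cont t ht)
    (R.φ_adapted t ht)

variable {R} (κ : Kernel Ω E)

theorem compProd_preimage_twoPointMotion [IsSFiniteKernel κ] {t : ℝ}
    (hκ_equiv : ∀ᵐ ω ∂ R.P, (κ ω).map (R.φ t ω) = κ (R.θ t ω)) {D : Set (E × E)}
    (hD : MeasurableSet D) :
    (R.P ⊗ₘ (κ ×ₖ κ)) (R.twoPointMotion t ⁻¹' D) = ((κ ×ₖ κ) ∘ₘ R.P) D := by
  have := R.P_prob
  have hφ : ∀ ω, Measurable (R.φ t ω) := fun ω =>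
    (R.measurable_φ_uncurry t).comp (measurable_const.prodMk measurable_id)
  rw [Measure.compProd_apply (R.measurable_twoPointMotion t hD),
    Measure.bind_apply hD (κ ×ₖ κ).measurable.aemeasurable,
    ← (R.θ_preserves t).lintegral_comp ((κ ×ₖ κ).measurable_coe hD)]
  refine lintegral_congr_ae ?_
  filter_upwards [hκ_equiv] with ω hω
  rw [Kernel.prod_apply, Kernel.prod_apply, ← hω, Measure.map_prod_map _ _ (hφ ω) (hφ ω),
    Measure.map_apply ((hφ ω).prodMap (hφ ω)) hD]
  rfl

theorem comp_apply_eq_lintegral_twoPointMotion [IsMarkovKernel κ] [SecondCountableTopology E]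
    (hκ_meas : ∀ B, MeasurableSet B → Measurable[R.F0] fun ω => κ ω B) {t : ℝ} (ht : 0 ≤ t)
    (hκ_equiv : ∀ᵐ ω ∂ R.P, (κ ω).map (R.φ t ω) = κ (R.θ t ω)) {D : Set (E × E)}
    (hD : MeasurableSet D) :
    ((κ ×ₖ κ) ∘ₘ R.P) D = ∫⁻ z, R.P {ω | R.twoPointMotion t (ω, z) ∈ D} ∂((κ ×ₖ κ) ∘ₘ R.P) := by
  have := R.P_prob
  have hκκ : ∀ B ∈ image2 (· ×ˢ ·) {B : Set E | MeasurableSet B} {B : Set E | MeasurableSet B},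
      Measurable[R.F0] fun ω => (κ ×ₖ κ) ω B := by
    rintro _ ⟨B₁, hB₁, B₂, hB₂, rfl⟩
    simp_rw [Kernel.prod_apply, Measure.prod_prod]
    exact (hκ_meas B₁ hB₁).mul (hκ_meas B₂ hB₂)
  rw [← compProd_preimage_twoPointMotion κ hκ_equiv hD,
    compProd_apply_eq_prod_comp_of_indep (R.F_le 0 t) R.F0_le (R.indep_F0_F ht) (κ ×ₖ κ)
      isPiSystem_prod generateFrom_prod
      (isCountablySpanning_measurableSet.prod isCountablySpanning_measurableSet) hκκ
      (R.measurable_twoPointMotion_F ht hD),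
    Measure.prod_apply_symm (R.measurable_twoPointMotion t hD)]
  rfl

theorem comp_apply_prod_eq_zero_of_stability [IsMarkovKernel κ] [SecondCountableTopology E]
    (hκ_meas : ∀ B, MeasurableSet B → Measurable[R.F0] fun ω => κ ω B)
    (hκ_equiv : ∀ t, 0 ≤ t → ∀ᵐ ω ∂ R.P, (κ ω).map (R.φ t ω) = κ (R.θ t ω))
    {ρ : Measure E} {U : Set E} (hstab : R.WeakLocalPointwiseStabilityOn ρ U)
    (hdiag : ((κ ×ₖ κ) ∘ₘ R.P) (diagonal E) = 0) :
    ((κ ×ₖ κ) ∘ₘ R.P) (U ×ˢ U) = 0 := by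
  have := R.P_prob
  obtain ⟨hU, -, t, -, ht, hδ⟩ := hstab
  let D : ℕ → Set (E × E) := fun k => {z | dist z.1 z.2 ≤ 1 / ((k : ℝ) + 1)}
  have hD : ∀ k, MeasurableSet (D k) := fun k =>
    (isClosed_le continuous_dist continuous_const).measurableSet
  refine measure_eq_zero_of_forall_le_liminf (hU.prod hU)
    (q := fun k n z => R.P ((fun ω => (ω, z)) ⁻¹' (R.twoPointMotion (t n) ⁻¹' D k)))
    (fun k n => measurable_measure_prodMk_right (R.measurable_twoPointMotion _ (hD k)))
    (fun k => ?_) (hdiag ▸ tendsto_measure_setOf_dist_le_one_div _) ?_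
  · filter_upwards [ht.eventually_ge_atTop 0] with n hn
    exact (comp_apply_eq_lintegral_twoPointMotion κ hκ_meas hn (hκ_equiv _ hn) (hD k)).ge
  · rintro ⟨x, y⟩ ⟨hx, hy⟩
    obtain ⟨δ, hδ₀, hδle⟩ := hδ x hx y hy
    exact ⟨δ, hδ₀, fun k => hδle _ (by positivity)⟩

end WhiteNoiseRDS

theorem statistical_equilibrium_has_atoms_general
    {Ω E : Type} [MeasurableSpace Ω] [MetricSpace E]
    [TopologicalSpace.SeparableSpace E] [MeasurableSpace E] [BorelSpace E]
    (R : WhiteNoiseRDS Ω E) (ρ : MeasureTheory.Measure E)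
    (U : Set E) (hstab : R.WeakLocalPointwiseStabilityOn ρ U)
    (μ : Ω → MeasureTheory.Measure E)
    (hμ_prob : ∀ ω, MeasureTheory.IsProbabilityMeasure (μ ω))
    (hμ_meas : ∀ B : Set E, MeasurableSet B → Measurable[R.F0] fun ω => μ ω B)
    (hμ_mean : ∀ B : Set E, MeasurableSet B → ∫⁻ ω, μ ω B ∂ R.P = ρ B)
    (hμ_equiv : ∀ t : ℝ, 0 ≤ t → ∀ᵐ ω ∂ R.P,
      (μ ω).map (R.φ t ω) = μ (R.θ t ω)) :
    ¬ (∀ᵐ ω ∂ R.P, ((μ ω).prod (μ ω)) (Set.diagonal E) = 0) := by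
  intro hdiag
  have : SecondCountableTopology E := UniformSpace.secondCountable_of_separable E
  let κ : Kernel Ω E := ⟨μ, Measure.measurable_of_measurable_coe _ fun B hB =>
    (hμ_meas B hB).mono R.F0_le le_rfl⟩
  have : IsMarkovKernel κ := ⟨hμ_prob⟩
  have hν_diag : ((κ ×ₖ κ) ∘ₘ R.P) (diagonal E) = 0 :=
    (Measure.bind_apply_eq_zero_iff _ measurableSet_diagonal).2 <| hdiag.mono fun ω h => by
      rw [Kernel.prod_apply]
      exact h
  have hμU : ∀ᵐ ω ∂ R.P, μ ω U = 0 := by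
    have hν_UU := WhiteNoiseRDS.comp_apply_prod_eq_zero_of_stability κ hμ_meas hμ_equiv hstab
      hν_diag
    refine ((Measure.bind_apply_eq_zero_iff _ (hstab.1.prod hstab.1)).1 hν_UU).mono
      fun ω h => ?_
    rwa [Kernel.prod_apply, Measure.prod_prod, mul_self_eq_zero] at h
  refine hstab.2.1.ne' ?_
  rw [← hμ_mean U hstab.1, lintegral_congr_ae hμU, lintegral_zero]

/-- **Lemma (statistical equilibrium has atoms).** If a white-noise RDS on a complete
separable metric space with invariant probability measure `ρ` satisfies weak local pointwise
stability on a Borel set `U` of positive `ρ`-measure, and `μ` is an `F_0`-measurable random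
Borel probability measure with mean `ρ` which is equivariant under the flow, then it is not
the case that `(μ_ω ⊗ μ_ω)(Δ) = 0` almost surely; equivalently, with positive probability
`μ_ω` has an atom. -/
theorem statistical_equilibrium_has_atoms
    {Ω E : Type} [MeasurableSpace Ω] [MetricSpace E] [CompleteSpace E]
    [TopologicalSpace.SeparableSpace E] [MeasurableSpace E] [BorelSpace E]
    (R : WhiteNoiseRDS Ω E) (ρ : MeasureTheory.Measure E)
    [MeasureTheory.IsProbabilityMeasure ρ]
    (hinv : R.Invariant ρ)
    (U : Set E) (hstab : R.WeakLocalPointwiseStabilityOn ρ U)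
    (μ : Ω → MeasureTheory.Measure E)
    (hμ_prob : ∀ ω, MeasureTheory.IsProbabilityMeasure (μ ω))
    (hμ_meas : ∀ B : Set E, MeasurableSet B → Measurable[R.F0] fun ω => μ ω B)
    (hμ_mean : ∀ B : Set E, MeasurableSet B → ∫⁻ ω, μ ω B ∂ R.P = ρ B)
    (hμ_equiv : ∀ t : ℝ, 0 ≤ t → ∀ᵐ ω ∂ R.P,
      (μ ω).map (R.φ t ω) = μ (R.θ t ω)) :
    ¬ (∀ᵐ ω ∂ R.P, ((μ ω).prod (μ ω)) (Set.diagonal E) = 0) :=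
  statistical_equilibrium_has_atoms_general R ρ U hstab μ hμ_prob hμ_meas hμ_mean hμ_equiv
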